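/- Let h be nonnegative bounded measurable on [0,∞) with α := ∫₀^∞ h < 1, h(t) → 0 as t → ∞, and let ψ = Σ_{n≥1} h^{*n}. Then ψ(t) → 0 as t → ∞. -/

import Mathlib

open MeasureTheory intervalIntegral

/-- Convolution on `[0,∞)`: `(f*g)(t) = ∫₀ᵗ f(t-s) g(s) ds`. -/
noncomputable def conv (f g : ℝ → ℝ) (t : ℝ) : ℝ := ∫ s in (0:ℝ)..t, f (t - s) * g s

/-- `convPow h n = h^{*(n+1)}`: the `(n+1)`-fold convolution power of `h`. -/
noncomputable def convPow (h : ℝ → ℝ) : ℕ → ℝ → ℝ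
  | 0 => h
  | n + 1 => conv (convPow h n) h

/-!
Since `0 ≤ h^{*n} ≤ C αⁿ` on `[0,∞)`, the series for `ψ` is dominated by a convergent geometric
series, so by Tannery's theorem it suffices that each `h^{*n}(t) → 0`. This follows by induction
from the fact that convolution with `h` preserves bounded functions vanishing at infinity: in
`∫₀ᵗ g(t-s) h(s) ds`, the part `s ≤ t - T` is small because `g` is small beyond `T`, and the part
`s > t - T` is at most `sup g · ∫_{t-T}^∞ h`, a tail of an integrable function.
-/

open Filter Topology Set

theorem setIntegral_Ioc_le_setIntegral_Ioi {h : ℝ → ℝ} {a b c : ℝ} (hh : ∀ u, 0 ≤ h u)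
    (hint : IntegrableOn h (Ioi a)) (hab : a ≤ b) :
    ∫ s in Ioc b c, h s ≤ ∫ s in Ioi a, h s :=
  setIntegral_mono_set hint (.of_forall hh)
    (Ioc_subset_Ioi_self.trans (Ioi_subset_Ioi hab)).eventuallyLE

section Convolution

variable {g h : ℝ → ℝ} {B δ T t : ℝ}

theorem conv_nonneg (hg : ∀ u, 0 ≤ u → 0 ≤ g u) (hh : ∀ u, 0 ≤ h u) (ht : 0 ≤ t) :
    0 ≤ conv g h t :=
  integral_nonneg ht fun s hs => mul_nonneg (hg _ (by linarith [hs.2])) (hh s)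

theorem conv_le_mul_add_mul (hg : ∀ u, 0 ≤ u → 0 ≤ g u) (hgB : ∀ u, 0 ≤ u → g u ≤ B)
    (hgδ : ∀ u, T ≤ u → g u ≤ δ) (hh : ∀ u, 0 ≤ h u) (hint : IntegrableOn h (Ioc 0 t))
    (hT : 0 ≤ T) (hTt : T ≤ t) :
    conv g h t ≤ δ * (∫ s in Ioc 0 t, h s) + B * ∫ s in Ioc (t - T) t, h s := by
  have hδ : 0 ≤ δ := (hg T hT).trans (hgδ T le_rfl)
  have hind : IntegrableOn ((Ioc (t - T) t).indicator h) (Ioc 0 t) :=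
    hint.indicator measurableSet_Ioc
  have hpointwise : ∀ s ∈ Ioc 0 t,
      g (t - s) * h s ≤ δ * h s + B * (Ioc (t - T) t).indicator h s := by
    intro s hs
    by_cases hsT : t - T < s
    · rw [indicator_of_mem (show s ∈ Ioc (t - T) t from ⟨hsT, hs.2⟩)]
      nlinarith [hgB (t - s) (by linarith [hs.2]), hh s]
    · rw [indicator_of_notMem fun hs' : s ∈ Ioc (t - T) t => hsT hs'.1]
      nlinarith [hgδ (t - s) (by linarith), hh s]
  calc conv g h t
      ≤ ∫ s in Ioc 0 t, (δ * h s + B * (Ioc (t - T) t).indicator h s) := by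
        rw [conv, integral_of_le (hT.trans hTt)]
        refine integral_mono_of_nonneg ?_ ((hint.const_mul δ).add (hind.const_mul B)) ?_
        · filter_upwards [ae_restrict_mem measurableSet_Ioc] with s hs
          exact mul_nonneg (hg _ (by linarith [hs.2])) (hh s)
        · filter_upwards [ae_restrict_mem measurableSet_Ioc] with s hs
          exact hpointwise s hs
    _ = δ * (∫ s in Ioc 0 t, h s) + B * ∫ s in Ioc (t - T) t, h s := by
        rw [integral_add (hint.const_mul δ) (hind.const_mul B), MeasureTheory.integral_const_mul,
          MeasureTheory.integral_const_mul, setIntegral_indicator measurableSet_Ioc,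
          inter_eq_self_of_subset_right (Ioc_subset_Ioc_left (by linarith))]

theorem conv_le_mul_integral (hg : ∀ u, 0 ≤ u → 0 ≤ g u) (hgB : ∀ u, 0 ≤ u → g u ≤ B)
    (hh : ∀ u, 0 ≤ h u) (hint : IntegrableOn h (Ioi 0)) (ht : 0 ≤ t) :
    conv g h t ≤ B * ∫ s in Ioi 0, h s := by
  have hB : 0 ≤ B := (hg 0 le_rfl).trans (hgB 0 le_rfl)
  have hsplit := conv_le_mul_add_mul hg hgB hgB hh
    (hint.mono_set Ioc_subset_Ioi_self) le_rfl ht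
  simp only [sub_zero, Ioc_self, setIntegral_empty, mul_zero, add_zero] at hsplit
  exact hsplit.trans
    (mul_le_mul_of_nonneg_left (setIntegral_Ioc_le_setIntegral_Ioi hh hint le_rfl) hB)

theorem tendsto_conv_atTop_zero (hg : ∀ u, 0 ≤ u → 0 ≤ g u) (hgB : ∀ u, 0 ≤ u → g u ≤ B)
    (hlim : Tendsto g atTop (𝓝 0)) (hh : ∀ u, 0 ≤ h u) (hint : IntegrableOn h (Ioi 0)) :
    Tendsto (conv g h) atTop (𝓝 0) := by
  set α := ∫ s in Ioi 0, h s
  have hα : 0 ≤ α := setIntegral_nonneg measurableSet_Ioi fun s _ => hh s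
  refine tendsto_order.2 ⟨fun a ha => ?_, fun ε hε => ?_⟩
  · filter_upwards [eventually_ge_atTop 0] with t ht
    exact ha.trans_le (conv_nonneg hg hh ht)
  set δ := ε / (α + 1)
  have hδ : 0 < δ := by positivity
  have hδα : δ * α < ε := by
    calc δ * α < δ * (α + 1) := by gcongr; linarith
      _ = ε := div_mul_cancel₀ ε (by positivity)
  obtain ⟨T₀, hT₀⟩ := eventually_atTop.1 (hlim.eventually (ge_mem_nhds hδ))
  set T := max T₀ 0
  have hgδ : ∀ u, T ≤ u → g u ≤ δ := fun u hu => hT₀ u ((le_max_left _ _).trans hu)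
  have htail : Tendsto (fun t => δ * α + B * ∫ s in Ioi (t - T), h s) atTop (𝓝 (δ * α)) := by
    simpa [sub_eq_add_neg] using tendsto_const_nhds.add ((tendsto_integral_Ioi_zero
      (tendsto_atTop_add_const_right atTop (-T) tendsto_id)).const_mul B)
  filter_upwards [htail.eventually_lt_const hδα, eventually_ge_atTop T] with t hlt ht
  have hB : 0 ≤ B := (hg 0 le_rfl).trans (hgB 0 le_rfl)
  calc conv g h t
      ≤ δ * (∫ s in Ioc 0 t, h s) + B * ∫ s in Ioc (t - T) t, h s :=
        conv_le_mul_add_mul hg hgB hgδ hh (hint.mono_set Ioc_subset_Ioi_self)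
          (le_max_right _ _) ht
    _ ≤ δ * α + B * ∫ s in Ioi (t - T), h s := by
        refine add_le_add (mul_le_mul_of_nonneg_left ?_ hδ.le) (mul_le_mul_of_nonneg_left ?_ hB)
        · exact setIntegral_Ioc_le_setIntegral_Ioi hh hint le_rfl
        · exact setIntegral_Ioc_le_setIntegral_Ioi hh
            (hint.mono_set (Ioi_subset_Ioi (by linarith [le_max_right T₀ 0]))) le_rfl
    _ < ε := hlt

end Convolution

section ConvolutionPower

variable {h : ℝ → ℝ} {C : ℝ}

theorem convPow_nonneg (hh : ∀ u, 0 ≤ h u) (n : ℕ) {t : ℝ} (ht : 0 ≤ t) :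
    0 ≤ convPow h n t := by
  induction n generalizing t with
  | zero => exact hh t
  | succ n ih => exact conv_nonneg (fun _ => ih) hh ht

theorem convPow_le (hh : ∀ u, 0 ≤ h u) (hint : IntegrableOn h (Ioi 0)) (hC : ∀ u, h u ≤ C)
    (n : ℕ) {t : ℝ} (ht : 0 ≤ t) :
    convPow h n t ≤ C * (∫ s in Ioi 0, h s) ^ n := by
  induction n generalizing t with
  | zero => simpa [convPow] using hC t
  | succ n ih =>
    rw [pow_succ, ← mul_assoc]
    exact conv_le_mul_integral (fun _ => convPow_nonneg hh n) (fun _ => ih) hh hint ht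

theorem tendsto_convPow_atTop_zero (hh : ∀ u, 0 ≤ h u) (hint : IntegrableOn h (Ioi 0))
    (hC : ∀ u, h u ≤ C) (hlim : Tendsto h atTop (𝓝 0)) (n : ℕ) :
    Tendsto (convPow h n) atTop (𝓝 0) := by
  induction n with
  | zero => exact hlim
  | succ n ih =>
    exact tendsto_conv_atTop_zero (fun _ => convPow_nonneg hh n)
      (fun _ => convPow_le hh hint hC n) ih hh hint

end ConvolutionPower

theorem psi_tendsto_zero_general
    (h : ℝ → ℝ) (C α : ℝ)
    (hnonneg : ∀ t, 0 ≤ h t)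
    (hint : IntegrableOn h (Set.Ioi 0))
    (hα : α = ∫ t in Set.Ioi (0:ℝ), h t) (hα1 : α < 1)
    (hC : ∀ t, h t ≤ C)
    (hlim : Filter.Tendsto h Filter.atTop (nhds 0)) :
    Filter.Tendsto (fun t => ∑' n : ℕ, convPow h n t) Filter.atTop (nhds 0) := by
  have hα0 : 0 ≤ α := hα ▸ setIntegral_nonneg measurableSet_Ioi fun t _ => hnonneg t
  have hdom : ∀ᶠ t in atTop, ∀ n, ‖convPow h n t‖ ≤ C * α ^ n := by
    filter_upwards [eventually_ge_atTop 0] with t ht n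
    rw [Real.norm_of_nonneg (convPow_nonneg hnonneg n ht), hα]
    exact convPow_le hnonneg hint hC n ht
  simpa using tendsto_tsum_of_dominated_convergence
    ((summable_geometric_of_lt_one hα0 hα1).mul_left C)
    (tendsto_convPow_atTop_zero hnonneg hint hC hlim) hdom

/-- If `h ≥ 0` is bounded measurable with `∫₀^∞ h = α < 1` and `h(t) → 0` as `t → ∞`,
then `ψ(t) = Σ_{n≥1} h^{*n}(t) → 0` as `t → ∞`. -/
theorem psi_tendsto_zero
    (h : ℝ → ℝ) (C α : ℝ)
    (hmeas : Measurable h) (hnonneg : ∀ t, 0 ≤ h t)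
    (hint : IntegrableOn h (Set.Ioi 0))
    (hα : α = ∫ t in Set.Ioi (0:ℝ), h t) (hα1 : α < 1)
    (hC : ∀ t, h t ≤ C)
    (hlim : Filter.Tendsto h Filter.atTop (nhds 0)) :
    Filter.Tendsto (fun t => ∑' n : ℕ, convPow h n t) Filter.atTop (nhds 0) :=
  psi_tendsto_zero_general h C α hnonneg hint hα hα1 hC hlim
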